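/- Let $S$ be a finite set of points in the plane and let $R$ be an axis-parallel rectangle partitioned by a vertical line $l_u$ and a horizontal line $l_v$ (both intersecting $R$) into four sub-rectangles $R_1, R_2, R_3, R_4$. Let $\phi$ be the shortest among the closest pairs of $S \cap R_1, \dots, S \cap R_4$ (over those sub-rectangles containing at least two points of $S$), with length $\delta$. Let $R_\alpha = R \cap ([\alpha-\delta,\alpha+\delta] \times \mathbb{R})$ and $R_\beta = R \cap (\mathbb{R} \times [\beta-\delta,\beta+\delta])$, where $l_u: x = \alpha$ and $l_v: y = \beta$. Then the closest pair of $S \cap R$ is the shortest among $\phi$, the closest pair of $S \cap R_\alpha$, and the closest pair of $S \cap R_\beta$. -/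

import Mathlib

open scoped Classical

/-- An axis-parallel rectangle `[a,b] × [c,d]` in the Euclidean plane. -/
noncomputable def rect (a b c d : ℝ) : Set (EuclideanSpace ℝ (Fin 2)) :=
  {p | p 0 ∈ Set.Icc a b ∧ p 1 ∈ Set.Icc c d}

/-- The finite set of distances between distinct points of a finite planar point set. -/
noncomputable def pairDists (T : Finset (EuclideanSpace ℝ (Fin 2))) : Finset ℝ :=
  ((T ×ˢ T).filter (fun q => q.1 ≠ q.2)).image (fun q => dist q.1 q.2)

lemma pairDists_mono {T T' : Finset (EuclideanSpace ℝ (Fin 2))} (h : T ⊆ T') :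
    pairDists T ⊆ pairDists T' := by
  unfold pairDists
  apply Finset.image_subset_image
  exact Finset.filter_subset_filter _ (Finset.product_subset_product h h)

lemma mem_pairDists {T : Finset (EuclideanSpace ℝ (Fin 2))} {a b}
    (ha : a ∈ T) (hb : b ∈ T) (hab : a ≠ b) : dist a b ∈ pairDists T := by
  unfold pairDists
  exact Finset.mem_image.2 ⟨(a, b), Finset.mem_filter.2 ⟨Finset.mem_product.2 ⟨ha, hb⟩, hab⟩, rfl⟩

lemma exists_of_mem_pairDists {T : Finset (EuclideanSpace ℝ (Fin 2))} {d}
    (hd : d ∈ pairDists T) : ∃ a b, a ∈ T ∧ b ∈ T ∧ a ≠ b ∧ dist a b = d := by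
  unfold pairDists at hd
  obtain ⟨⟨a, b⟩, hq, hdist⟩ := Finset.mem_image.1 hd
  obtain ⟨hp, hne⟩ := Finset.mem_filter.1 hq
  obtain ⟨ha, hb⟩ := Finset.mem_product.1 hp
  exact ⟨a, b, ha, hb, hne, hdist⟩

lemma coord_dist_le (a b : EuclideanSpace ℝ (Fin 2)) (i : Fin 2) :
    |a i - b i| ≤ dist a b := by
  rw [EuclideanSpace.dist_eq, ← Real.sqrt_sq_eq_abs]
  apply Real.sqrt_le_sqrt
  calc (a i - b i) ^ 2 = dist (a i) (b i) ^ 2 := by rw [Real.dist_eq, sq_abs]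
    _ ≤ ∑ j, dist (a j) (b j) ^ 2 :=
        Finset.single_le_sum (f := fun j => dist (a j) (b j) ^ 2)
          (fun j _ => sq_nonneg _) (Finset.mem_univ i)

lemma rect_subset_rect {a b c d a' b' c' d' : ℝ} (ha : a' ≤ a) (hb : b ≤ b')
    (hc : c' ≤ c) (hd : d ≤ d') : rect a b c d ⊆ rect a' b' c' d' := by
  rintro p ⟨⟨h1, h2⟩, ⟨h3, h4⟩⟩
  exact ⟨⟨ha.trans h1, h2.trans hb⟩, ⟨hc.trans h3, h4.trans hd⟩⟩

/-- with `R` cut by `x = α` and `y = β` into `R₁,…,R₄`, `δ` the length of the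
shortest closest pair among the sub-rectangles containing at least two points of `S`, and
`R_α`, `R_β` the intersections of `R` with the strips of half-width `δ` around the two lines,
the closest-pair distance of `S ∩ R` is the minimum of `δ`, the closest-pair distance of
`S ∩ R_α` and that of `S ∩ R_β` (expressed via minima of the respective distance sets). -/
theorem stmt_5 (S : Finset (EuclideanSpace ℝ (Fin 2)))
    (x₁ x₂ y₁ y₂ α β δ : ℝ)
    (hx : x₁ ≤ α) (hx' : α ≤ x₂) (hy : y₁ ≤ β) (hy' : β ≤ y₂)
    (R R₁ R₂ R₃ R₄ Rα Rβ : Set (EuclideanSpace ℝ (Fin 2)))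
    (hRdef : R = rect x₁ x₂ y₁ y₂)
    (h1 : R₁ = rect x₁ α y₁ β) (h2 : R₂ = rect α x₂ y₁ β)
    (h3 : R₃ = rect x₁ α β y₂) (h4 : R₄ = rect α x₂ β y₂)
    (hRα : Rα = R ∩ {p | p 0 ∈ Set.Icc (α - δ) (α + δ)})
    (hRβ : Rβ = R ∩ {p | p 1 ∈ Set.Icc (β - δ) (β + δ)})
    (U : Finset ℝ)
    (hU : U = pairDists (S.filter (· ∈ R₁)) ∪ pairDists (S.filter (· ∈ R₂)) ∪
      pairDists (S.filter (· ∈ R₃)) ∪ pairDists (S.filter (· ∈ R₄)))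
    (hUne : U.Nonempty) (hδ : δ = U.min' hUne)
    (hcard : 2 ≤ (S.filter (· ∈ R)).card) :
    (pairDists (S.filter (· ∈ R))).min =
      (insert δ (pairDists (S.filter (· ∈ Rα)) ∪ pairDists (S.filter (· ∈ Rβ)))).min := by
  set D := pairDists (S.filter (· ∈ R)) with hD
  set B := insert δ (pairDists (S.filter (· ∈ Rα)) ∪ pairDists (S.filter (· ∈ Rβ))) with hB
  -- each sub-rectangle is contained in R
  have hsub : ∀ Q : Set (EuclideanSpace ℝ (Fin 2)), Q ⊆ R →
      pairDists (S.filter (· ∈ Q)) ⊆ D := fun Q hQ =>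
    pairDists_mono (Finset.monotone_filter_right S (fun p _ hp => hQ hp))
  have hR1 : R₁ ⊆ R := h1 ▸ hRdef ▸ rect_subset_rect le_rfl hx' le_rfl hy'
  have hR2 : R₂ ⊆ R := h2 ▸ hRdef ▸ rect_subset_rect hx le_rfl le_rfl hy'
  have hR3 : R₃ ⊆ R := h3 ▸ hRdef ▸ rect_subset_rect le_rfl hx' hy le_rfl
  have hR4 : R₄ ⊆ R := h4 ▸ hRdef ▸ rect_subset_rect hx le_rfl hy le_rfl
  have hUD : U ⊆ D := by
    rw [hU]
    refine Finset.union_subset (Finset.union_subset (Finset.union_subset ?_ ?_) ?_) ?_ <;>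
      [exact hsub _ hR1; exact hsub _ hR2; exact hsub _ hR3; exact hsub _ hR4]
  have hδD : δ ∈ D := hUD (hδ ▸ U.min'_mem hUne)
  have hBD : B ⊆ D := by
    rw [hB]
    refine Finset.insert_subset hδD (Finset.union_subset ?_ ?_)
    · exact hsub _ (hRα ▸ Set.inter_subset_left)
    · exact hsub _ (hRβ ▸ Set.inter_subset_left)
  have hDne : D.Nonempty := ⟨δ, hδD⟩
  have hBne : B.Nonempty := ⟨δ, Finset.mem_insert_self _ _⟩
  set m := D.min' hDne with hm
  have hmδ : m ≤ δ := Finset.min'_le _ _ hδD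
  -- the minimum of D belongs to B
  have hmB : m ∈ B := by
    rcases eq_or_lt_of_le hmδ with heq | hlt
    · rw [heq]; exact Finset.mem_insert_self _ _
    · obtain ⟨a, b, ha, hb, hab, hdist⟩ := exists_of_mem_pairDists (D.min'_mem hDne)
      rw [← hm] at hdist
      have haS := Finset.mem_filter.1 ha
      have hbS := Finset.mem_filter.1 hb
      have haR : a ∈ R := haS.2
      have hbR : b ∈ R := hbS.2
      -- if both points lie in a common sub-rectangle, contradiction with m < δ
      have hquad : ∀ Q : Set (EuclideanSpace ℝ (Fin 2)),
          pairDists (S.filter (· ∈ Q)) ⊆ U → a ∈ Q → b ∈ Q → False := by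
        intro Q hQU haQ hbQ
        have : dist a b ∈ U := hQU (mem_pairDists (Finset.mem_filter.2 ⟨haS.1, haQ⟩)
          (Finset.mem_filter.2 ⟨hbS.1, hbQ⟩) hab)
        have : δ ≤ m := hdist ▸ hδ ▸ Finset.min'_le U _ this
        linarith
      have hsub1 : pairDists (S.filter (· ∈ R₁)) ⊆ U := by
        rw [hU]; intro x hx; exact Finset.mem_union_left _ (Finset.mem_union_left _
          (Finset.mem_union_left _ hx))
      have hsub2 : pairDists (S.filter (· ∈ R₂)) ⊆ U := by
        rw [hU]; intro x hx; exact Finset.mem_union_left _ (Finset.mem_union_left _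
          (Finset.mem_union_right _ hx))
      have hsub3 : pairDists (S.filter (· ∈ R₃)) ⊆ U := by
        rw [hU]; intro x hx; exact Finset.mem_union_left _ (Finset.mem_union_right _ hx)
      have hsub4 : pairDists (S.filter (· ∈ R₄)) ⊆ U := by
        rw [hU]; intro x hx; exact Finset.mem_union_right _ hx
      -- coordinate gap bounds
      have hgap0 : |a 0 - b 0| ≤ m := hdist ▸ coord_dist_le a b 0
      have hgap1 : |a 1 - b 1| ≤ m := hdist ▸ coord_dist_le a b 1
      -- if the vertical line separates a and b, both lie in the strip Rα
      have keyx : ∀ p q : EuclideanSpace ℝ (Fin 2), p ∈ Finset.filter (· ∈ R) S →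
          q ∈ Finset.filter (· ∈ R) S → p ≠ q → dist p q = m →
          p 0 ≤ α → α ≤ q 0 → m ∈ B := by
        intro p q hp hq hpq hd hpα hqα
        have hgap : |p 0 - q 0| ≤ m := hd ▸ coord_dist_le p q 0
        rw [abs_le] at hgap
        have hpS := Finset.mem_filter.1 hp
        have hqS := Finset.mem_filter.1 hq
        have hpRα : p ∈ Rα := by
          rw [hRα]; exact ⟨hpS.2, ⟨by linarith, by linarith⟩⟩
        have hqRα : q ∈ Rα := by
          rw [hRα]; exact ⟨hqS.2, ⟨by linarith, by linarith⟩⟩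
        have : dist p q ∈ pairDists (S.filter (· ∈ Rα)) :=
          mem_pairDists (Finset.mem_filter.2 ⟨hpS.1, hpRα⟩)
            (Finset.mem_filter.2 ⟨hqS.1, hqRα⟩) hpq
        rw [hB]
        exact Finset.mem_insert_of_mem (Finset.mem_union_left _ (hd ▸ this))
      have keyy : ∀ p q : EuclideanSpace ℝ (Fin 2), p ∈ Finset.filter (· ∈ R) S →
          q ∈ Finset.filter (· ∈ R) S → p ≠ q → dist p q = m →
          p 1 ≤ β → β ≤ q 1 → m ∈ B := by
        intro p q hp hq hpq hd hpβ hqβ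
        have hgap : |p 1 - q 1| ≤ m := hd ▸ coord_dist_le p q 1
        rw [abs_le] at hgap
        have hpS := Finset.mem_filter.1 hp
        have hqS := Finset.mem_filter.1 hq
        have hpRβ : p ∈ Rβ := by
          rw [hRβ]; exact ⟨hpS.2, ⟨by linarith, by linarith⟩⟩
        have hqRβ : q ∈ Rβ := by
          rw [hRβ]; exact ⟨hqS.2, ⟨by linarith, by linarith⟩⟩
        have : dist p q ∈ pairDists (S.filter (· ∈ Rβ)) :=
          mem_pairDists (Finset.mem_filter.2 ⟨hpS.1, hpRβ⟩)
            (Finset.mem_filter.2 ⟨hqS.1, hqRβ⟩) hpq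
        rw [hB]
        exact Finset.mem_insert_of_mem (Finset.mem_union_right _ (hd ▸ this))
      have hdist' : dist b a = m := by rw [dist_comm]; exact hdist
      -- rectangle coordinate bounds
      have haRc : a 0 ∈ Set.Icc x₁ x₂ ∧ a 1 ∈ Set.Icc y₁ y₂ := by rw [hRdef] at haR; exact haR
      have hbRc : b 0 ∈ Set.Icc x₁ x₂ ∧ b 1 ∈ Set.Icc y₁ y₂ := by rw [hRdef] at hbR; exact hbR
      rcases le_total (a 0) α with hax | hax <;> rcases le_total (b 0) α with hbx | hbx
      · -- both left of the vertical line
        rcases le_total (a 1) β with hay | hay <;> rcases le_total (b 1) β with hby | hby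
        · exact absurd (hquad R₁ hsub1
            (h1 ▸ ⟨⟨haRc.1.1, hax⟩, ⟨haRc.2.1, hay⟩⟩)
            (h1 ▸ ⟨⟨hbRc.1.1, hbx⟩, ⟨hbRc.2.1, hby⟩⟩)) (fun h => h)
        · exact keyy a b ha hb hab hdist hay hby
        · exact keyy b a hb ha hab.symm hdist' hby hay
        · exact absurd (hquad R₃ hsub3
            (h3 ▸ ⟨⟨haRc.1.1, hax⟩, ⟨hay, haRc.2.2⟩⟩)
            (h3 ▸ ⟨⟨hbRc.1.1, hbx⟩, ⟨hby, hbRc.2.2⟩⟩)) (fun h => h)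
      · exact keyx a b ha hb hab hdist hax hbx
      · exact keyx b a hb ha hab.symm hdist' hbx hax
      · -- both right of the vertical line
        rcases le_total (a 1) β with hay | hay <;> rcases le_total (b 1) β with hby | hby
        · exact absurd (hquad R₂ hsub2
            (h2 ▸ ⟨⟨hax, haRc.1.2⟩, ⟨haRc.2.1, hay⟩⟩)
            (h2 ▸ ⟨⟨hbx, hbRc.1.2⟩, ⟨hbRc.2.1, hby⟩⟩)) (fun h => h)
        · exact keyy a b ha hb hab hdist hay hby
        · exact keyy b a hb ha hab.symm hdist' hby hay
        · exact absurd (hquad R₄ hsub4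
            (h4 ▸ ⟨⟨hax, haRc.1.2⟩, ⟨hay, haRc.2.2⟩⟩)
            (h4 ▸ ⟨⟨hbx, hbRc.1.2⟩, ⟨hby, hbRc.2.2⟩⟩)) (fun h => h)
  -- conclude: the minima agree
  have hmin' : B.min' hBne = m := by
    apply le_antisymm (Finset.min'_le _ _ hmB)
    exact Finset.min'_le _ _ (hBD (B.min'_mem hBne)) |>.trans_eq rfl |>.trans' le_rfl
  rw [← Finset.coe_min' hDne, ← Finset.coe_min' hBne, hmin']
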